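/- Given s > 2 and fixed digits c_1,…,c_n ∈ {1,…,s-1}, the supremum of the cylinder Δ'_{c_1…c_n} equals g_n + 1/(s^{c_1+⋯+c_n}(s-1)), where g_n = Σ_{k=1}^n c_k/s^{c_1+⋯+c_k}; this supremum is attained by the sequence continuing with c_k = 1 for all k > n. -/

import Mathlib

open Finset

/-- The term of the series: `c n / s ^ (c 1 + ... + c (n+1))` (0-indexed). -/
noncomputable def sTerm (s : ℕ) (c : ℕ → ℕ) (n : ℕ) : ℝ :=
  (c n : ℝ) / (s : ℝ) ^ (∑ k ∈ Finset.range (n + 1), c k)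

/-- `x = Σ_{k=1}^∞ c_k / s^{c_1+⋯+c_k}`. -/
noncomputable def sVal (s : ℕ) (c : ℕ → ℕ) : ℝ := ∑' n : ℕ, sTerm s c n

/-- The sequence `(c_k)` has all terms in `{1, ..., s-1}`. -/
def sValid (s : ℕ) (c : ℕ → ℕ) : Prop := ∀ k, 1 ≤ c k ∧ c k ≤ s - 1

/-- The set `S_{(s,0)}`. -/
def Sset (s : ℕ) : Set ℝ := { x | ∃ c : ℕ → ℕ, sValid s c ∧ x = sVal s c }

/-- The cylinder `Δ'_{c_1 ... c_n}` of rank `n` with base the first `n` terms of `c`. -/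
def cyl (s n : ℕ) (c : ℕ → ℕ) : Set ℝ :=
  { x | ∃ c' : ℕ → ℕ, sValid s c' ∧ (∀ k < n, c' k = c k) ∧ x = sVal s c' }

/-- The cylinder `Δ'_{c_1 ... c_n p}`: prefix of length `n` from `c`, next digit `p`. -/
def cylExt (s n : ℕ) (c : ℕ → ℕ) (p : ℕ) : Set ℝ :=
  { x | ∃ c' : ℕ → ℕ, sValid s c' ∧ (∀ k < n, c' k = c k) ∧ c' n = p ∧ x = sVal s c' }

/-- `g_n = Σ_{k=1}^n c_k / s^{c_1+⋯+c_k}`. -/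
noncomputable def gPart (s n : ℕ) (c : ℕ → ℕ) : ℝ := ∑ k ∈ Finset.range n, sTerm s c k

/-!
Write `σ_m = c_1 + ⋯ + c_m` and `B_m = g_m + 1/(s^{σ_m}(s-1))`. Appending a digit `d` changes
`B_m` by `(d(s-1) + 1 - s^d) / (s^{σ_m + d}(s-1)) ≤ 0` (Bernoulli), so `B_m` decreases in `m`
and dominates every partial sum `g_m`; hence `B_n` bounds the cylinder. Continuing with ones
turns the tail into the geometric series `Σ_{k≥1} s^{-σ_n-k} = 1/(s^{σ_n}(s-1))`, so `B_n` is
attained.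
-/

noncomputable def cylBound (s n : ℕ) (c : ℕ → ℕ) : ℝ :=
  gPart s n c + 1 / ((s : ℝ) ^ (∑ k ∈ range n, c k) * ((s : ℝ) - 1))

section Prefix

variable {s n : ℕ} {c c' : ℕ → ℕ}

lemma sTerm_congr (h : ∀ k < n, c' k = c k) {k : ℕ} (hk : k < n) :
    sTerm s c' k = sTerm s c k := by
  unfold sTerm
  rw [h k hk, sum_congr rfl fun j hj => h j ((mem_range.mp hj).trans_le hk)]

lemma gPart_congr (h : ∀ k < n, c' k = c k) : gPart s n c' = gPart s n c :=
  sum_congr rfl fun _ hk => sTerm_congr h (mem_range.mp hk)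

lemma cylBound_congr (h : ∀ k < n, c' k = c k) : cylBound s n c' = cylBound s n c := by
  rw [cylBound, cylBound, gPart_congr h, sum_congr rfl fun k hk => h k (mem_range.mp hk)]

end Prefix

section Bound

variable {s : ℕ} (c : ℕ → ℕ)

lemma sTerm_nonneg (k : ℕ) : 0 ≤ sTerm s c k := by
  unfold sTerm; positivity

lemma gPart_mono : Monotone fun m => gPart s m c := fun _ _ hmn =>
  sum_le_sum_of_subset_of_nonneg (range_subset_range.mpr hmn) fun k _ _ => sTerm_nonneg c k

variable {c} (hs : 1 < s)
include hs

lemma gPart_le_cylBound (m : ℕ) : gPart s m c ≤ cylBound s m c := by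
  have : (1 : ℝ) < s := by exact_mod_cast hs
  have : 0 ≤ 1 / ((s : ℝ) ^ (∑ k ∈ range m, c k) * ((s : ℝ) - 1)) := by
    apply div_nonneg zero_le_one; positivity
  unfold cylBound; linarith

lemma cylBound_succ_le (m : ℕ) : cylBound s (m + 1) c ≤ cylBound s m c := by
  have hx : (1 : ℝ) < s := by exact_mod_cast hs
  set σ := ∑ k ∈ range m, c k
  set d := c m
  have bernoulli : (d : ℝ) * (s - 1) + 1 ≤ (s : ℝ) ^ d := by
    simpa [add_comm] using one_add_mul_le_pow (a := (s : ℝ) - 1) (by linarith) d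
  have hs1 : (0 : ℝ) < s - 1 := by linarith
  have hσ : (0 : ℝ) < (s : ℝ) ^ σ * (s : ℝ) ^ d * (s - 1) := by positivity
  have step : (d : ℝ) / (s : ℝ) ^ (σ + d) + 1 / ((s : ℝ) ^ (σ + d) * (s - 1))
      ≤ 1 / ((s : ℝ) ^ σ * (s - 1)) := by
    calc (d : ℝ) / (s : ℝ) ^ (σ + d) + 1 / ((s : ℝ) ^ (σ + d) * (s - 1))
        = (d * (s - 1) + 1) / ((s : ℝ) ^ σ * (s : ℝ) ^ d * (s - 1)) := by
          rw [pow_add]; field_simp [hs1.ne']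
      _ ≤ (s : ℝ) ^ d / ((s : ℝ) ^ σ * (s : ℝ) ^ d * (s - 1)) := by gcongr
      _ = 1 / ((s : ℝ) ^ σ * (s - 1)) := by field_simp
  simp only [cylBound, gPart, sum_range_succ, sTerm] at step ⊢
  linarith

lemma cylBound_antitone : Antitone fun m => cylBound s m c :=
  antitone_nat_of_succ_le (cylBound_succ_le hs)

lemma sVal_le_cylBound (n : ℕ) : sVal s c ≤ cylBound s n c := by
  refine Real.tsum_le_of_sum_range_le (sTerm_nonneg c) fun m => ?_
  calc gPart s m c ≤ gPart s (max m n) c := gPart_mono c (le_max_left m n)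
    _ ≤ cylBound s (max m n) c := gPart_le_cylBound hs _
    _ ≤ cylBound s n c := cylBound_antitone hs (le_max_right m n)

lemma sVal_eq_cylBound_of_eq_one {n : ℕ} (hone : ∀ k, n ≤ k → c k = 1) :
    sVal s c = cylBound s n c := by
  have hx : (1 : ℝ) < s := by exact_mod_cast hs
  set σ := ∑ k ∈ range n, c k
  have htail : ∀ k, sTerm s c (k + n) = ((s : ℝ) ^ (σ + 1))⁻¹ * ((s : ℝ)⁻¹) ^ k := by
    intro k
    have hexp : ∑ j ∈ range (k + n + 1), c j = σ + 1 + k := by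
      rw [show k + n + 1 = n + (k + 1) by omega, sum_range_add,
        sum_congr rfl fun j _ => hone (n + j) (Nat.le_add_right n j)]
      simp only [sum_const, card_range, smul_eq_mul, mul_one]
      omega
    rw [sTerm, hone (k + n) (Nat.le_add_left n k), hexp, Nat.cast_one, pow_add, inv_pow]
    field_simp
  have hgeom : HasSum (fun k => sTerm s c (k + n)) (1 / ((s : ℝ) ^ σ * ((s : ℝ) - 1))) := by
    have hr : (s : ℝ)⁻¹ < 1 := inv_lt_one_of_one_lt₀ hx
    have hlim : 1 / ((s : ℝ) ^ σ * ((s : ℝ) - 1))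
        = ((s : ℝ) ^ (σ + 1))⁻¹ * (1 - (s : ℝ)⁻¹)⁻¹ := by
      have : (s : ℝ) - 1 ≠ 0 := by linarith
      field_simp
      ring
    rw [funext htail, hlim]
    exact (hasSum_geometric_of_lt_one (by positivity) hr).mul_left _
  have hsum : HasSum (sTerm s c) (cylBound s n c) :=
    (hasSum_nat_add_iff' n).mp (by rwa [cylBound, gPart, add_sub_cancel_left])
  exact hsum.tsum_eq

end Bound

theorem stmt4 (s n : ℕ) (hs : 2 < s) (c : ℕ → ℕ) (hc : ∀ k < n, 1 ≤ c k ∧ c k ≤ s - 1) :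
    IsGreatest (cyl s n c)
      (gPart s n c + 1 / ((s : ℝ) ^ (∑ k ∈ Finset.range n, c k) * ((s : ℝ) - 1))) ∧
      gPart s n c + 1 / ((s : ℝ) ^ (∑ k ∈ Finset.range n, c k) * ((s : ℝ) - 1)) =
        sVal s (fun k => if k < n then c k else 1) := by
  change IsGreatest _ (cylBound s n c) ∧ cylBound s n c = _
  have hs1 : 1 < s := by omega
  set c₁ : ℕ → ℕ := fun k => if k < n then c k else 1
  have hprefix : ∀ k < n, c₁ k = c k := fun k hk => if_pos hk
  have hvalid : sValid s c₁ := fun k => by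
    by_cases hk : k < n
    · simpa [c₁, hk] using hc k hk
    · simp only [c₁, hk, if_false]; omega
  have hattained : cylBound s n c = sVal s c₁ :=
    ((sVal_eq_cylBound_of_eq_one hs1 fun k hk => if_neg (by omega)).trans
      (cylBound_congr hprefix)).symm
  refine ⟨⟨⟨c₁, hvalid, hprefix, hattained⟩, ?_⟩, hattained⟩
  rintro _ ⟨c', -, hprefix', rfl⟩
  exact (sVal_le_cylBound hs1 n).trans_eq (cylBound_congr hprefix')
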